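/- Let t be a k-ary polymorphism of 𝔄, let i ∈ {0, ..., n}, and let l_a, l_i, l_{i+1}, ..., l_n ∈ ℕ satisfy m·l_a + l_i + l_{i+1} + ⋯ + l_n = k. Suppose that for every j ∈ {0, ..., m−1}, t applied to the k-tuple whose coordinates in positions j·l_a + 1, ..., (j+1)·l_a equal a, whose remaining coordinates among the first m·l_a + l_i positions equal i, and which then has l_{i+1} coordinates equal to i+1, ..., and l_n coordinates equal to n, returns the value i. Then for all x_1, ..., x_{l_i} ∈ {0, 1, ..., i−1}, t(a, ..., a, x_1, ..., x_{l_i}, i+1, ..., i+1, ..., n, ..., n) ≠ a, where a occurs m·l_a times and each value j ∈ {i+1, ..., n} occurs l_j times. The same holds when the arguments are permuted by a fixed permutation applied uniformly in all hypotheses and the conclusion. -/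
import Mathlib


/- The universe `A = {a, 0, 1, ..., n}` of size `n+2` is encoded as `Fin (n+2)`,
where `a` is encoded as `0` and the element `i ∈ {0, ..., n}` is encoded as `i+1`;
this encoding is order-preserving for the order `a < 0 < 1 < ⋯ < n`. -/

/-- A `k`-ary operation `t` is compatible with (preserves) an `r`-ary relation `S`:
applying `t` coordinatewise to `k` tuples from `S` yields a tuple in `S`. -/
def Compat {A : Type*} {k r : ℕ} (t : (Fin k → A) → A) (S : Set (Fin r → A)) : Prop :=
  ∀ u : Fin k → Fin r → A, (∀ j, u j ∈ S) → (fun i => t fun j => u j i) ∈ S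

/-- Compatibility with a unary relation `X`: `t` maps `X^k` into `X`. -/
def CompatUnary {A : Type*} {k : ℕ} (t : (Fin k → A) → A) (X : Set A) : Prop :=
  ∀ u : Fin k → A, (∀ j, u j ∈ X) → t u ∈ X

/-- Compatibility with a binary relation, given as a set of pairs. -/
def Compat2 {A : Type*} {k : ℕ} (t : (Fin k → A) → A) (S : Set (A × A)) : Prop :=
  ∀ u w : Fin k → A, (∀ j, (u j, w j) ∈ S) → (t u, t w) ∈ S

/-- An operation `t : A^k → A` is a near-unanimity (NU) operation if `k ≥ 3` and
any tuple whose coordinates all equal `x` except possibly one coordinate (with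
value `y`) is mapped to the majority value `x`. -/
def IsNU {A : Type*} {k : ℕ} (t : (Fin k → A) → A) : Prop :=
  3 ≤ k ∧ ∀ (x y : A) (j : Fin k), t (Function.update (fun _ => x) j y) = x

/-- The `(m+1)`-ary relation `S_i`: all tuples `(x_0, …, x_m)` with
`x_0 ∈ {a,0,…,i-1}` (encoded value `≤ i`) and `x_1, …, x_m ∈ {a, i}` (encoded value
`0` or `i+1`), except the tuple `(a, i, …, i)`, together with the constant tuples
`(j, …, j)` for `j ∈ {i+1, …, n}` (encoded value `≥ i+2`). -/
def Srel (n m i : ℕ) : Set (Fin (m + 1) → Fin (n + 2)) :=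
  {x | ((x 0).val ≤ i ∧ (∀ j, j ≠ 0 → ((x j).val = 0 ∨ (x j).val = i + 1)) ∧
          ¬((x 0).val = 0 ∧ ∀ j, j ≠ 0 → (x j).val = i + 1)) ∨
        (∃ c : Fin (n + 2), i + 2 ≤ c.val ∧ ∀ j, x j = c)}

/-- A polymorphism of the structure `𝔄 = (A; S_0, …, S_n, (X)_{∅ ≠ X ⊆ A})`:
an operation compatible with each `S_i` and with every nonempty unary relation. -/
def PolyA (n m : ℕ) {k : ℕ} (t : (Fin k → Fin (n + 2)) → Fin (n + 2)) : Prop :=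
  (∀ i ≤ n, Compat t (Srel n m i)) ∧
  (∀ X : Set (Fin (n + 2)), X.Nonempty → CompatUnary t X)

/-- Lemma 2 of the paper. The coordinates `Fin k` are classified by a map `c`:
`Sum.inl j` (for `j : Fin m`) are the `m` blocks of `a`'s, each of size `l_a`;
`Sum.inr i` is the block of size `l_i` (receiving `i`, resp. arbitrary elements of
`{0,…,i-1}`); `Sum.inr v` for `v ∈ {i+1,…,n}` is the block of size `l_v` receiving
the constant value `v`.  (An arbitrary classification accounts for an arbitrary,
fixed permutation of the arguments used uniformly in hypotheses and conclusion.)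
If for each `j < m` the tuple with `a` on the `j`-th `a`-block, `i` on the other
`a`-blocks and on the `i`-block, and `v` on each `v`-block is mapped by `t` to `i`,
then any tuple with `a` on all `a`-blocks, values from `{0,…,i-1}` on the `i`-block
and `v` on each `v`-block is not mapped to `a`. -/
theorem stmt4 (n m : ℕ) (hm : 2 ≤ m) (k : ℕ)
    (t : (Fin k → Fin (n + 2)) → Fin (n + 2)) (ht : PolyA n m t)
    (i : ℕ) (hi : i ≤ n)
    (la li : ℕ) (l : ℕ → ℕ)
    (hsum : m * la + li + (∑ v ∈ Finset.Icc (i + 1) n, l v) = k)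
    (c : Fin k → Sum (Fin m) ℕ)
    (hcrange : ∀ q v, c q = Sum.inr v → i ≤ v ∧ v ≤ n)
    (hca : ∀ j : Fin m, (Finset.univ.filter (fun q => c q = Sum.inl j)).card = la)
    (hci : (Finset.univ.filter (fun q => c q = Sum.inr i)).card = li)
    (hcl : ∀ v, i + 1 ≤ v → v ≤ n →
      (Finset.univ.filter (fun q => c q = Sum.inr v)).card = l v)
    (hrows : ∀ j : Fin m, ∀ w : Fin k → Fin (n + 2),
      (∀ q, (c q = Sum.inl j → w q = 0) ∧
            (∀ j' : Fin m, c q = Sum.inl j' → j' ≠ j → (w q).val = i + 1) ∧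
            (∀ v, c q = Sum.inr v → (w q).val = v + 1)) →
      (t w).val = i + 1) :
    ∀ w : Fin k → Fin (n + 2),
      (∀ q, (∀ j : Fin m, c q = Sum.inl j → w q = 0) ∧
            (c q = Sum.inr i → 1 ≤ (w q).val ∧ (w q).val ≤ i) ∧
            (∀ v, c q = Sum.inr v → v ≠ i → (w q).val = v + 1)) →
      t w ≠ 0 := by
  intro w hw hta
  have hi2 : i + 1 < n + 2 := by omega
  -- the m hypothesis rows
  set r : Fin m → Fin k → Fin (n + 2) := fun j q =>
    match c q with
    | Sum.inl j' => if j' = j then 0 else ⟨i + 1, hi2⟩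
    | Sum.inr v => if h : v ≤ n then ⟨v + 1, by omega⟩ else 0 with hrdef
  have hrval : ∀ j, (t (r j)).val = i + 1 := by
    intro j
    apply hrows j
    intro q
    refine ⟨?_, ?_, ?_⟩
    · intro h; simp only [r, h]; simp
    · intro j' h hne; simp only [r, h]; simp [hne]
    · intro v h
      have hv := (hcrange q v h).2
      simp only [r, h]; simp [hv]
  -- apply compatibility with S_i
  have hS := ht.1 i hi (fun q => Fin.cases (w q) (fun j => r j q)) ?_
  · -- the output tuple is (t w, t r_0, ..., t r_{m-1}) = (a, i, ..., i): contradiction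
    have h0 : (fun q => (Fin.cases (w q) (fun j => r j q) : Fin (m+1) → Fin (n+2)) 0) = w := by
      funext q; simp
    rcases hS with ⟨_, _, hbad⟩ | ⟨cc, hcc, hall⟩
    · apply hbad
      constructor
      · simp only [h0, hta]; rfl
      · intro jj hjj
        induction jj using Fin.cases with
        | zero => exact absurd rfl hjj
        | succ j =>
          have : (fun q => (Fin.cases (w q) (fun j' => r j' q) : Fin (m+1) → Fin (n+2)) j.succ)
              = r j := by funext q; simp
          simpa [this] using hrval j
    · have h1 := hall 0
      simp only [h0, hta] at h1
      have : cc.val = 0 := by rw [← h1]; rfl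
      omega
  · -- each column lies in S_i
    intro q
    rcases h : c q with j0 | v
    · -- an a-block column: (a, i, ..., i, a(at j0), i, ..., i)
      left
      refine ⟨?_, ?_, ?_⟩
      · have := (hw q).1 j0 h
        simp [this]
      · intro jj hjj
        induction jj using Fin.cases with
        | zero => exact absurd rfl hjj
        | succ j =>
          simp only [Fin.cases_succ, r, h]
          by_cases hj : j0 = j <;> simp [hj]
      · rintro ⟨hz, hne⟩
        have := hne j0.succ (Fin.succ_ne_zero j0)
        simp only [Fin.cases_succ, r, h] at this
        simp at this
    · by_cases hv : v = i
      · -- the i-block column: (w q, i, ..., i) with 1 ≤ w q ≤ i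
        subst hv
        have hwq := (hw q).2.1 h
        left
        refine ⟨?_, ?_, ?_⟩
        · simpa using hwq.2
        · intro jj hjj
          induction jj using Fin.cases with
          | zero => exact absurd rfl hjj
          | succ j =>
            right
            simp only [Fin.cases_succ, r, h]
            simp [hi]
        · rintro ⟨hz, -⟩
          simp only [Fin.cases_zero] at hz
          omega
      · -- a constant column (v, ..., v), v ≥ i+1
        right
        have hvr := hcrange q v h
        have hv1 : i + 1 ≤ v := by omega
        refine ⟨⟨v + 1, by omega⟩, by simp; omega, ?_⟩
        intro jj
        induction jj using Fin.cases with
        | zero =>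
          have := (hw q).2.2 v h hv
          simp only [Fin.cases_zero]
          exact Fin.ext (by simp [this])
        | succ j =>
          simp only [Fin.cases_succ, r, h]
          simp [hvr.2]
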